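/- arXiv:1109.6283 — 3 statements merged into one kernel-verified Lean document; each statement's English description precedes it below -/
import Mathlib

section
/- The cluster measure equals the push-forward of the auxiliary marked-configuration measure under the cluster-projection map: μ_cl = 𝔮*μ̂, i.e., for every bounded measurable F on Γ_X^♯, ∫ F(γ) dμ_cl(γ) = ∫ F(𝔮(γ̂)) dμ̂(γ̂). Equivalently, the Laplace functionals coincide: L_{𝔮*μ̂}(f) = ∫_{Γ_X^♯} Π_{x∈γ} ( ∫_𝔛 exp(−Σ_{y_i∈ȳ} f(y_i)) dη_x(ȳ) ) dμ(γ) for all measurable f : X → ℝ≥0. -/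
open MeasureTheory ENNReal
open scoped NNReal

/-- `exp(−S)` for `S ∈ [0,∞]`, with `exp(−∞) = 0`. -/
noncomputable def negExp (S : ℝ≥0∞) : ℝ≥0∞ :=
  if S = ⊤ then 0 else ENNReal.ofReal (Real.exp (-S.toReal))

/-!
Fix the centres `γ`. Writing `S z = Σ_i f(z_i)` for the mass of a cluster, `negExp` turns the
series `Σ_k S(y_k)` into the infinite product `Π_k negExp (S(y_k))`, because it is a continuous
morphism `([0,∞], +) → ([0,1], ·)`. Its factors lie in `[0,1]`, so the product is the decreasing
limit of its finite partial products; monotone convergence moves the integral over the clusters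
inside the limit, and each finite product factorises by independence of the clusters.
-/

lemma negExp_eq_exp_neg (S : ℝ≥0∞) : negExp S = EReal.exp (-(S : EReal)) := by
  induction S with
  | top => simp [negExp]
  | coe r => simp [negExp]; rfl

lemma continuous_negExp : Continuous negExp := by
  simp_rw [funext negExp_eq_exp_neg]
  exact ENNReal.continuous_exp.comp (continuous_neg.comp continuous_coe_ennreal_ereal)

lemma negExp_le_one (S : ℝ≥0∞) : negExp S ≤ 1 := by
  simp [negExp_eq_exp_neg, EReal.coe_ennreal_nonneg]

lemma negExp_add (a b : ℝ≥0∞) : negExp (a + b) = negExp a * negExp b := by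
  rw [negExp_eq_exp_neg, negExp_eq_exp_neg, negExp_eq_exp_neg, ← EReal.exp_add,
    EReal.coe_ennreal_add, EReal.neg_add (Or.inl (EReal.coe_ennreal_ne_bot a))
      (Or.inr (EReal.coe_ennreal_ne_bot b))]
  rfl

lemma negExp_sum {ι : Type*} (s : Finset ι) (a : ι → ℝ≥0∞) :
    negExp (∑ i ∈ s, a i) = ∏ i ∈ s, negExp (a i) := by
  classical
  induction s using Finset.cons_induction with
  | empty => simp [negExp]
  | cons i s _ ih => rw [Finset.sum_cons, Finset.prod_cons, negExp_add, ih]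

lemma negExp_tsum {ι : Type*} (a : ι → ℝ≥0∞) : negExp (∑' i, a i) = ∏' i, negExp (a i) := by
  have h : HasProd (fun i => negExp (a i)) (negExp (∑' i, a i)) := by
    have := (continuous_negExp.tendsto _).comp (ENNReal.summable (f := a)).hasSum
    simpa only [HasProd, Function.comp_def, negExp_sum] using this
  exact h.tprod_eq.symm

lemma lintegral_tprod_eq_tprod_of_le_one {ι Ω : Type*} [Countable ι] [MeasurableSpace Ω]
    {P : Measure Ω} {F : ι → Ω → ℝ≥0∞} {c : ι → ℝ≥0∞} (hF : ∀ i, Measurable (F i))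
    (hF_le : ∀ i ω, F i ω ≤ 1)
    (hc : ∀ s : Finset ι, ∫⁻ ω, ∏ i ∈ s, F i ω ∂P = ∏ i ∈ s, c i) :
    ∫⁻ ω, ∏' i, F i ω ∂P = ∏' i, c i := by
  have hP : ∫⁻ _, 1 ∂P = 1 := by simpa using hc ∅
  have hprod_le : ∀ s : Finset ι, ∫⁻ ω, ∏ i ∈ s, F i ω ∂P ≤ 1 := fun s =>
    hP ▸ lintegral_mono fun ω => Finset.prod_le_one' fun i _ => hF_le i ω
  have hc_le : ∀ i, c i ≤ 1 := fun i => by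
    simpa only [Finset.prod_singleton] using (hc {i}).symm.trans_le (hprod_le {i})
  calc ∫⁻ ω, ∏' i, F i ω ∂P = ∫⁻ ω, ⨅ s : Finset ι, ∏ i ∈ s, F i ω ∂P := by
        simp_rw [ENNReal.tprod_eq_iInf_prod fun i => hF_le i _]
    _ = ⨅ s : Finset ι, ∫⁻ ω, ∏ i ∈ s, F i ω ∂P :=
        lintegral_iInf_directed_of_measurable (fun h => by simp [h] at hP)
          (fun s => Finset.measurable_prod s fun i _ => hF i)
          (fun s => ne_top_of_le_ne_top one_ne_top (hprod_le s))
          (Antitone.directed_ge fun s t hst ω =>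
            Finset.prod_anti_set_of_le_one' (fun i => hF_le i ω) hst)
    _ = ∏' i, c i := by simp_rw [hc, ENNReal.tprod_eq_iInf_prod hc_le]

lemma measurable_sigma_of_forall {α : Type*} {β : α → Type*} [∀ a, MeasurableSpace (β a)]
    {γ : Type*} [MeasurableSpace γ] {F : Sigma β → γ}
    (hF : ∀ a, Measurable fun b => F ⟨a, b⟩) : Measurable F := fun _ hs =>
  MeasurableSpace.measurableSet_iInf.2 fun a => hF a hs

theorem cluster_measure_laplace_functional_general
    {X : Type*} [MeasurableSpace X]
    (η : X → Measure (Σ n : ℕ, Fin n → X))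
    (μ : Measure (ℕ → X))
    (P : (ℕ → X) → Measure (ℕ → Σ n : ℕ, Fin n → X))
    (hP : ∀ (γ : ℕ → X) (s : Finset ℕ) (g : ℕ → (Σ n : ℕ, Fin n → X) → ℝ≥0∞),
      (∀ k, Measurable (g k)) →
      ∫⁻ y, ∏ k ∈ s, g k (y k) ∂(P γ) = ∏ k ∈ s, ∫⁻ z, g k z ∂(η (γ k)))
    (f : X → ℝ≥0) (hf : Measurable f) :
    ∫⁻ γ, ∫⁻ y, negExp (∑' k, ∑ i : Fin (y k).1, (f ((y k).2 i) : ℝ≥0∞)) ∂(P γ) ∂μ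
      = ∫⁻ γ, ∏' k, ∫⁻ yv, negExp (∑ i : Fin yv.1, (f (yv.2 i) : ℝ≥0∞)) ∂(η (γ k)) ∂μ := by
  set S : (Σ n : ℕ, Fin n → X) → ℝ≥0∞ := fun z => ∑ i : Fin z.1, (f (z.2 i) : ℝ≥0∞)
  have hS : Measurable fun z => negExp (S z) :=
    continuous_negExp.measurable.comp <| measurable_sigma_of_forall fun n =>
      Finset.measurable_sum Finset.univ fun i _ =>
        (hf.comp (measurable_pi_apply i)).coe_nnreal_ennreal
  refine lintegral_congr fun γ => ?_
  simp_rw [negExp_tsum]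
  exact lintegral_tprod_eq_tprod_of_le_one (fun k => hS.comp (measurable_pi_apply k))
    (fun _ _ => negExp_le_one _) fun s => hP γ s _ fun _ => hS

/-- Theorem 3.3. The cluster measure is the push-forward of the auxiliary
marked-configuration measure `μ̂` under the cluster-projection map `𝔮`; equivalently, their
Laplace functionals coincide:
`L_{𝔮*μ̂}(f) = ∫_{Γ_X} Π_{x∈γ} ( ∫_𝔛 e^{−Σ_{yᵢ∈ȳ} f(yᵢ)} dη_x(ȳ) ) dμ(γ)`.
Encoding: centres `γ : ℕ → X`, independent clusters `ȳ_k ∼ η_{γ(k)}` via the product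
family `P γ` (property `hP`); `⟨f, 𝔮(γ,ȳ)⟩ = Σ_k Σ_i f(ȳ_k(i))`. -/
theorem cluster_measure_laplace_functional
    {X : Type*} [TopologicalSpace X] [PolishSpace X] [MeasurableSpace X] [BorelSpace X]
    (η : X → Measure (Σ n : ℕ, Fin n → X)) [∀ x, IsProbabilityMeasure (η x)]
    (hη : ∀ B : Set (Σ n : ℕ, Fin n → X), MeasurableSet B → Measurable fun x => η x B)
    (μ : Measure (ℕ → X)) [IsProbabilityMeasure μ]
    (P : (ℕ → X) → Measure (ℕ → Σ n : ℕ, Fin n → X))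
    [∀ γ, IsProbabilityMeasure (P γ)]
    (hP : ∀ (γ : ℕ → X) (s : Finset ℕ) (g : ℕ → (Σ n : ℕ, Fin n → X) → ℝ≥0∞),
      (∀ k, Measurable (g k)) →
      ∫⁻ y, ∏ k ∈ s, g k (y k) ∂(P γ) = ∏ k ∈ s, ∫⁻ z, g k z ∂(η (γ k)))
    (f : X → ℝ≥0) (hf : Measurable f) :
    ∫⁻ γ, ∫⁻ y, negExp (∑' k, ∑ i : Fin (y k).1, (f ((y k).2 i) : ℝ≥0∞)) ∂(P γ) ∂μ
      = ∫⁻ γ, ∏' k, ∫⁻ yv, negExp (∑ i : Fin yv.1, (f (yv.2 i) : ℝ≥0∞)) ∂(η (γ k)) ∂μ :=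
  cluster_measure_laplace_functional_general η μ P hP f hf
end

section
/- The cluster measure μ_cl is quasi-invariant under the group Diff₀(X) of compactly supported diffeomorphisms: for every φ ∈ Diff₀(X), the push-forward φ*μ_cl is absolutely continuous with respect to μ_cl, with density R_{μ_cl}^φ = I_𝔮* R_{μ̂}^{φ̂} ∈ L¹(Γ_X, μ_cl). -/
open MeasureTheory ENNReal

/-- Theorem 4.4. Quasi-invariance of the cluster measure
`μ_cl = 𝔮*μ̂`: for every (diffeomorphism) `φ` with vertical lift `φ̂` satisfying
`φ ∘ 𝔮 = 𝔮 ∘ φ̂`, if `μ̂` is quasi-invariant under `φ̂` with Radon–Nikodym density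
`R̂ ∈ L¹(μ̂)` then `φ*μ_cl` is absolutely continuous w.r.t. `μ_cl` with density
`R = I_𝔮* R̂ ∈ L¹(μ_cl)` (characterised by `∫ (F∘𝔮)·R̂ dμ̂ = ∫ F·R dμ_cl`). -/
theorem cluster_measure_quasiInvariant
    {Ω₁ Ω₂ : Type*} [MeasurableSpace Ω₁] [MeasurableSpace Ω₂]
    (μhat : Measure Ω₁) [IsProbabilityMeasure μhat]
    (q : Ω₁ → Ω₂) (hq : Measurable q)
    (φhat : Ω₁ → Ω₁) (hφhat : Measurable φhat) (hφhatBij : Function.Bijective φhat)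
    (φ : Ω₂ → Ω₂) (hφ : Measurable φ) (hφBij : Function.Bijective φ)
    (hcomm : φ ∘ q = q ∘ φhat)
    (Rhat : Ω₁ → ℝ≥0∞) (hRhatMeas : Measurable Rhat)
    (hQI : μhat.map φhat = μhat.withDensity Rhat)
    (hRhatL1 : ∫⁻ ω, Rhat ω ∂μhat < ⊤) :
    ∃ R : Ω₂ → ℝ≥0∞, Measurable R ∧
      (∫⁻ γ, R γ ∂(μhat.map q)) < ⊤ ∧
      (μhat.map q).map φ = (μhat.map q).withDensity R ∧
      ∀ F : Ω₂ → ℝ≥0∞, Measurable F →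
        ∫⁻ ω, F (q ω) * Rhat ω ∂μhat = ∫⁻ γ, F γ * R γ ∂(μhat.map q) := by
  set μq : Measure Ω₂ := μhat.map q with hμq
  set ν : Measure Ω₂ := (μhat.withDensity Rhat).map q with hν
  have hνfin : IsFiniteMeasure ν := by
    constructor
    rw [hν, Measure.map_apply hq MeasurableSet.univ]
    simpa [withDensity_apply _ MeasurableSet.univ] using hRhatL1
  haveI := hνfin
  have hac : ν ≪ μq := by
    exact Measure.AbsolutelyContinuous.map (withDensity_absolutelyContinuous μhat Rhat) hq
  set R : Ω₂ → ℝ≥0∞ := ν.rnDeriv μq with hR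
  have hRmeas : Measurable R := Measure.measurable_rnDeriv ν μq
  have hνeq : μq.withDensity R = ν := Measure.withDensity_rnDeriv_eq ν μq hac
  have hmap : μq.map φ = ν := by
    rw [hμq, Measure.map_map hφ hq, hcomm, ← Measure.map_map hq hφhat, hQI]
  have hint : ∀ F : Ω₂ → ℝ≥0∞, Measurable F →
      ∫⁻ ω, F (q ω) * Rhat ω ∂μhat = ∫⁻ γ, F γ * R γ ∂μq := by
    intro F hF
    have e1 := lintegral_withDensity_eq_lintegral_mul μhat hRhatMeas (hF.comp hq)
    have e2 := lintegral_withDensity_eq_lintegral_mul μq hRmeas hF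
    simp only [Function.comp, Pi.mul_apply] at e1 e2
    have h1 : ∫⁻ ω, F (q ω) * Rhat ω ∂μhat = ∫⁻ γ, F γ ∂ν := by
      rw [hν, lintegral_map hF hq, e1]
      simp [mul_comm]
    have h2 : ∫⁻ γ, F γ * R γ ∂μq = ∫⁻ γ, F γ ∂ν := by
      rw [← hνeq, e2]
      simp [mul_comm]
    rw [h1, h2]
  refine ⟨R, hRmeas, ?_, by rw [hmap, ← hνeq], hint⟩
  calc ∫⁻ γ, R γ ∂μq = ∫⁻ γ, 1 * R γ ∂μq := by simp
    _ = ∫⁻ ω, (1 : ℝ≥0∞) * Rhat ω ∂μhat := (hint 1 measurable_const).symm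
    _ < ⊤ := by simpa using hRhatL1
end

section
/- Let μ be a probability measure on Γ_X with correlation functions κ_μ^m (with respect to θ) existing and bounded for all m = 1,…,n. Then μ ∈ M_θ^n(Γ_X): for every f ∈ ⋂_{1≤q≤n} L^q(X,θ), ∫ |⟨f,γ⟩|^n dμ(γ) < ∞. -/
open MeasureTheory ENNReal
open scoped NNReal

/-!
Expanding `(∑ₖ |f (γ k)|)ⁿ` as a sum over `n`-tuples of indices and grouping the tuples by the
set of `m ≤ n` distinct indices they hit bounds it by `∑ₘ ∑_{v injective} φₘ (γ ∘ v)`, where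
`φₘ w = ∑_{p : Fin n ↠ Fin m} ∏ᵢ |f (w (p i))|` is symmetric. The defining identity of the
correlation function turns the `μ`-integral of the `m`-th term into `∫ φₘ κₘ dθ^{⊗m}`, which is at
most `cₘ ∫ φₘ dθ^{⊗m}`; each summand of `φₘ` factorises as `∏ⱼ |f (w j)|^{#p⁻¹(j)}` with
`1 ≤ #p⁻¹(j) ≤ n`, so its integral is a finite product of finite `L^q` norms.
-/

open Function

theorem MeasureTheory.lintegral_fin_nat_prod_eq_prod {n : ℕ} {E : Type*} [MeasurableSpace E]
    {μ : Fin n → Measure E} [∀ i, SigmaFinite (μ i)] {f : Fin n → E → ℝ≥0∞}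
    (hf : ∀ i, Measurable (f i)) :
    ∫⁻ x : Fin n → E, ∏ i, f i (x i) ∂(Measure.pi μ) = ∏ i, ∫⁻ x, f i x ∂(μ i) := by
  induction n with
  | zero => simp
  | succ n ih =>
    calc
      _ = ∫⁻ x : E × (Fin n → E),
            f 0 x.1 * ∏ i : Fin n, f (Fin.succ i) (x.2 i)
            ∂((μ 0).prod (Measure.pi (fun i ↦ μ i.succ))) := by
          rw [← (measurePreserving_piFinSuccAbove μ 0).symm.lintegral_comp_emb
            (MeasurableEquiv.measurableEmbedding _)]
          simp_rw [MeasurableEquiv.piFinSuccAbove_symm_apply, Fin.insertNthEquiv,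
            Fin.prod_univ_succ, Fin.insertNth_zero, Equiv.coe_fn_mk, Fin.cons_succ,
            Fin.zero_succAbove, cast_eq, Fin.cons_zero]
      _ = (∫⁻ x, f 0 x ∂μ 0) * ∏ i : Fin n, ∫⁻ x, f i.succ x ∂(μ i.succ) := by
          rw [lintegral_prod_mul (g := fun y : Fin n → E ↦ ∏ i, f i.succ (y i))
            (hf 0).aemeasurable
            (Finset.measurable_prod _ fun i _ ↦
              (hf i.succ).comp (measurable_pi_apply i)).aemeasurable,
            ih fun i ↦ hf i.succ]
      _ = ∏ i, ∫⁻ x, f i x ∂(μ i) := by rw [Fin.prod_univ_succ]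

theorem ENNReal.tsum_pow_eq_tsum_prod {ι : Type*} (a : ι → ℝ≥0∞) (n : ℕ) :
    (∑' k, a k) ^ n = ∑' u : Fin n → ι, ∏ i, a (u i) := by
  induction n with
  | zero => simp
  | succ n ih =>
    calc (∑' k, a k) ^ (n + 1)
        = ∑' k, ∑' u : Fin n → ι, a k * ∏ i, a (u i) := by
          simp_rw [pow_succ', ih, ENNReal.tsum_mul_left, ENNReal.tsum_mul_right]
      _ = ∑' u : Fin (n + 1) → ι, ∏ i, a (u i) := by
          rw [← ENNReal.tsum_prod' (f := fun p : ι × (Fin n → ι) ↦ a p.1 * ∏ i, a (p.2 i)),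
            ← (Fin.consEquiv fun _ ↦ ι).tsum_eq]
          simp [Fin.consEquiv, Fin.prod_univ_succ]

theorem exists_injective_comp_surjective_fin {ι : Type*} {n : ℕ} (u : Fin n → ι) :
    ∃ m ≤ n, ∃ v : Fin m → ι, Injective v ∧ ∃ p : Fin n → Fin m, Surjective p ∧ v ∘ p = u := by
  let e := Finite.equivFin (Set.range u)
  refine ⟨_, (Finite.card_range_le u).trans_eq (Nat.card_fin n), Subtype.val ∘ e.symm,
    Subtype.val_injective.comp e.symm.injective, e ∘ Set.rangeFactorization u,
    e.surjective.comp Set.rangeFactorization_surjective, ?_⟩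
  ext i
  exact congrArg Subtype.val (e.symm_apply_apply _)

noncomputable def surjectionSum {X : Type*} (n m : ℕ) (g : X → ℝ≥0∞) (w : Fin m → X) : ℝ≥0∞ :=
  ∑ p : {p : Fin n → Fin m // Surjective p}, ∏ i, g (w (p.1 i))

theorem surjectionSum_comp_perm {X : Type*} (n m : ℕ) (g : X → ℝ≥0∞) (w : Fin m → X)
    (σ : Equiv.Perm (Fin m)) : surjectionSum n m g (w ∘ σ) = surjectionSum n m g w :=
  Fintype.sum_equiv
    ⟨fun p ↦ ⟨σ ∘ p.1, σ.surjective.comp p.2⟩, fun p ↦ ⟨σ.symm ∘ p.1, σ.symm.surjective.comp p.2⟩,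
      fun p ↦ by ext; simp, fun p ↦ by ext; simp⟩ _ _ fun _ ↦ rfl

theorem surjectionSum_zero {X : Type*} {n : ℕ} (hn : n ≠ 0) (g : X → ℝ≥0∞) (w : Fin 0 → X) :
    surjectionSum n 0 g w = 0 := by
  have : IsEmpty (Fin n → Fin 0) := ⟨fun p ↦ (p ⟨0, Nat.pos_of_ne_zero hn⟩).elim0⟩
  simp [surjectionSum]

@[fun_prop]
theorem measurable_surjectionSum {X : Type*} [MeasurableSpace X] {g : X → ℝ≥0∞}
    (hg : Measurable g) (n m : ℕ) : Measurable (surjectionSum n m g) := by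
  unfold surjectionSum
  fun_prop

theorem ENNReal.tsum_pow_le_sum_tsum_surjectionSum {ι : Type*} (a : ι → ℝ≥0∞) (n : ℕ) :
    (∑' k, a k) ^ n ≤
      ∑ m ∈ Finset.range (n + 1), ∑' v : {v : Fin m → ι // Injective v}, surjectionSum n m a v := by
  let factor : (Σ m : Fin (n + 1), {v : Fin m → ι // Injective v} ×
      {p : Fin n → Fin m // Surjective p}) → (Fin n → ι) := fun b ↦ b.2.1.1 ∘ b.2.2.1
  have hfactor : Surjective factor := fun u ↦ by
    obtain ⟨m, hm, v, hv, p, hp, rfl⟩ := exists_injective_comp_surjective_fin u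
    exact ⟨⟨⟨m, Nat.lt_succ_of_le hm⟩, ⟨v, hv⟩, ⟨p, hp⟩⟩, rfl⟩
  rw [ENNReal.tsum_pow_eq_tsum_prod, ← Fin.sum_univ_eq_sum_range]
  refine (ENNReal.tsum_le_tsum_comp_of_surjective hfactor _).trans_eq ?_
  rw [ENNReal.tsum_sigma', tsum_fintype]
  refine Finset.sum_congr rfl fun m _ ↦ ?_
  rw [ENNReal.tsum_prod']
  exact tsum_congr fun v ↦ tsum_fintype _

theorem lintegral_surjectionSum_lt_top {X : Type*} [MeasurableSpace X] (θ : Measure X)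
    [SigmaFinite θ] {g : X → ℝ≥0∞} (hg : Measurable g) {n : ℕ}
    (hint : ∀ k, 1 ≤ k → k ≤ n → ∫⁻ x, g x ^ k ∂θ < ⊤) (m : ℕ) :
    ∫⁻ w, surjectionSum n m g w ∂(Measure.pi fun _ : Fin m ↦ θ) < ⊤ := by
  classical
  simp only [surjectionSum]
  rw [lintegral_finsetSum _ fun p _ ↦ by fun_prop]
  refine ENNReal.sum_lt_top.2 fun ⟨p, hp⟩ _ ↦ ?_
  have group_by_fibres (w : Fin m → X) :
      ∏ i, g (w (p i)) = ∏ j, g (w j) ^ (Finset.univ.filter (p · = j)).card := by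
    rw [Finset.prod_comp (fun j ↦ g (w j)) p, Finset.image_univ_of_surjective hp]
  simp_rw [group_by_fibres]
  rw [lintegral_fin_nat_prod_eq_prod fun j ↦ hg.pow_const _]
  refine ENNReal.prod_lt_top fun j _ ↦ hint _ ?_ ?_
  · obtain ⟨i, rfl⟩ := hp j
    exact Finset.card_pos.2 ⟨i, by simp⟩
  · exact (Finset.card_filter_le _ _).trans_eq (Finset.card_fin n)

theorem MeasureTheory.lintegral_mul_lt_top_of_le_const {α : Type*} [MeasurableSpace α]
    {ν : Measure α} {φ κ : α → ℝ≥0∞} (hφ : Measurable φ) (hφν : ∫⁻ x, φ x ∂ν < ⊤) {c : ℝ≥0∞}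
    (hc : c < ⊤) (hκ : ∀ x, κ x ≤ c) : ∫⁻ x, φ x * κ x ∂ν < ⊤ :=
  calc ∫⁻ x, φ x * κ x ∂ν ≤ ∫⁻ x, φ x * c ∂ν := lintegral_mono fun x ↦ by gcongr; exact hκ x
    _ = (∫⁻ x, φ x ∂ν) * c := lintegral_mul_const c hφ
    _ < ⊤ := ENNReal.mul_lt_top hφν hc

theorem momentClass_of_bounded_correlations_general
    {X : Type*} [MeasurableSpace X]
    (θ : Measure X) [SigmaFinite θ]
    (μ : Measure (ℕ → X))
    (n : ℕ) (hn : 1 ≤ n)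
    (κ : (m : ℕ) → (Fin m → X) → ℝ≥0∞)
    (hκBdd : ∀ m, 1 ≤ m → m ≤ n → ∃ c : ℝ≥0∞, c < ⊤ ∧ ∀ v, κ m v ≤ c)
    (hcorr : ∀ m, 1 ≤ m → m ≤ n →
      ∀ φ : (Fin m → X) → ℝ≥0∞, Measurable φ →
        (∀ (v : Fin m → X) (σ : Equiv.Perm (Fin m)), φ (v ∘ σ) = φ v) →
        ∫⁻ γ, ∑' v : {v : Fin m → ℕ // Function.Injective v}, φ (γ ∘ (v : Fin m → ℕ)) ∂μ
          = ∫⁻ v, φ v * κ m v ∂(Measure.pi fun _ : Fin m => θ)) :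
    ∀ f : X → ℝ, Measurable f →
      (∀ q : ℝ, 1 ≤ q → q ≤ (n : ℝ) → ∫⁻ x, (‖f x‖₊ : ℝ≥0∞) ^ q ∂θ < ⊤) →
      ∫⁻ γ, (∑' k, (‖f (γ k)‖₊ : ℝ≥0∞)) ^ n ∂μ < ⊤ := by
  intro f hf hLp
  set g : X → ℝ≥0∞ := fun x ↦ ‖f x‖₊
  have hg : Measurable g := by fun_prop
  have hgpow (k : ℕ) (hk : 1 ≤ k) (hkn : k ≤ n) : ∫⁻ x, g x ^ k ∂θ < ⊤ := by
    simpa only [ENNReal.rpow_natCast] using hLp k (mod_cast hk) (mod_cast hkn)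
  have hterm (m : ℕ) (hm : m ≤ n) :
      ∫⁻ γ, ∑' v : {v : Fin m → ℕ // Injective v}, surjectionSum n m g (γ ∘ v) ∂μ < ⊤ := by
    rcases Nat.eq_zero_or_pos m with rfl | hm₀
    · simp [surjectionSum_zero (Nat.one_le_iff_ne_zero.1 hn)]
    obtain ⟨c, hc, hκc⟩ := hκBdd m hm₀ hm
    rw [hcorr m hm₀ hm _ (measurable_surjectionSum hg n m) (surjectionSum_comp_perm n m g)]
    exact lintegral_mul_lt_top_of_le_const (measurable_surjectionSum hg n m)
      (lintegral_surjectionSum_lt_top θ hg hgpow m) hc hκc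
  calc ∫⁻ γ, (∑' k, g (γ k)) ^ n ∂μ
      ≤ ∫⁻ γ, ∑ m ∈ Finset.range (n + 1),
          ∑' v : {v : Fin m → ℕ // Injective v}, surjectionSum n m g (γ ∘ v) ∂μ :=
        lintegral_mono fun γ ↦ ENNReal.tsum_pow_le_sum_tsum_surjectionSum (g ∘ γ) n
    _ = ∑ m ∈ Finset.range (n + 1),
          ∫⁻ γ, ∑' v : {v : Fin m → ℕ // Injective v}, surjectionSum n m g (γ ∘ v) ∂μ :=
        lintegral_finsetSum _ fun m _ ↦ .tsum fun v ↦ by fun_prop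
    _ < ⊤ := ENNReal.sum_lt_top.2 fun m hm ↦ hterm m (Nat.lt_succ_iff.1 (Finset.mem_range.1 hm))

/-- Lemma B.3. If the correlation functions `κ_μ^m` of `μ` with respect
to `θ` exist and are bounded for all `m = 1,…,n`, then `μ ∈ M_θ^n(Γ_X)`: for every
`f ∈ ⋂_{1≤q≤n} L^q(X,θ)`, `∫ |⟨f,γ⟩|^n dμ(γ) < ∞`.
Encoding: configurations indexed as `γ : ℕ → X`; the defining property of the correlation
function (for symmetric nonnegative `φ`) is stated via sums over injective index tuples,
`∫ Σ_{i : Fin m ↪ ℕ} φ(γ∘i) dμ = ∫_{X^m} φ·κ_μ^m dθ^{⊗m}`. -/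
theorem momentClass_of_bounded_correlations
    {X : Type*} [TopologicalSpace X] [PolishSpace X] [MeasurableSpace X] [BorelSpace X]
    (θ : Measure X) [SigmaFinite θ]
    (μ : Measure (ℕ → X)) [IsProbabilityMeasure μ]
    (n : ℕ) (hn : 1 ≤ n)
    (κ : (m : ℕ) → (Fin m → X) → ℝ≥0∞)
    (hκMeas : ∀ m, Measurable (κ m))
    (hκBdd : ∀ m, 1 ≤ m → m ≤ n → ∃ c : ℝ≥0∞, c < ⊤ ∧ ∀ v, κ m v ≤ c)
    (hcorr : ∀ m, 1 ≤ m → m ≤ n →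
      ∀ φ : (Fin m → X) → ℝ≥0∞, Measurable φ →
        (∀ (v : Fin m → X) (σ : Equiv.Perm (Fin m)), φ (v ∘ σ) = φ v) →
        ∫⁻ γ, ∑' v : {v : Fin m → ℕ // Function.Injective v}, φ (γ ∘ (v : Fin m → ℕ)) ∂μ
          = ∫⁻ v, φ v * κ m v ∂(Measure.pi fun _ : Fin m => θ)) :
    ∀ f : X → ℝ, Measurable f →
      (∀ q : ℝ, 1 ≤ q → q ≤ (n : ℝ) → ∫⁻ x, (‖f x‖₊ : ℝ≥0∞) ^ q ∂θ < ⊤) →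
      ∫⁻ γ, (∑' k, (‖f (γ k)‖₊ : ℝ≥0∞)) ^ n ∂μ < ⊤ :=
  momentClass_of_bounded_correlations_general θ μ n hn κ hκBdd hcorr
end
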